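/- arXiv:1905.04934 — 3 statements merged into one kernel-verified Lean document; each statement's English description precedes it below -/
import Mathlib

section
/- Let g : ℝ^d → ℂ be continuous with ‖g‖_{W(L^∞,ℓ¹)} < ∞, and let M ∈ GL(d,ℝ). Then the map D_{M,g} : c = (c_k)_{k∈ℤ^d} ↦ ∑_{k∈ℤ^d} c_k·T_{Mk}g is bounded from ℓ^∞(ℤ^d) into L^∞(ℝ^d), with the series converging pointwise absolutely. Furthermore, for every p ∈ [1,∞], the map D_{M,g} : ℓ^p(ℤ^d) → L^p(ℝ^d) is well-defined and bounded, with operator norm ‖D_{M,g}‖_{ℓ^p→L^p} ≤ |det M|^{1/p}·‖g∘M‖_{W(L^∞,ℓ¹)}. -/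
/-!
Pointwise `|D c (x)| ≤ ∑ₖ |cₖ| bₖ(x)` with `bₖ(x) = |g (x - M k)|`. Since
`g (x - M k) = (g ∘ M) (M⁻¹ x - k)` and the integer translates of a point meet every unit cube
once, `∑ₖ bₖ(x) ≤ ‖g ∘ M‖_W`; by translation invariance and the substitution `x = M y`,
`∫ bₖ = |det M| ‖g ∘ M‖_{L¹} ≤ |det M| ‖g ∘ M‖_W`. Hölder in `k`,
`(∑ aₖ bₖ)^p ≤ (∑ aₖ^p bₖ) (∑ bₖ)^{p-1}`, turns these two bounds into the `ℓ^p → L^p` estimate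
(a Schur test). Absolute convergence for bounded `c` needs `‖g‖_W < ∞` itself: two lattice points
`x - M k`, `x - M k'` in the same unit cube have `k - k'` in the finite set of `m` with
`|(M m)ᵢ| < 1`, so each cube is hit a bounded number of times.
-/

open MeasureTheory Matrix
open scoped ENNReal NNReal

noncomputable section

/-- `ℝ^d` with the Euclidean norm. -/
abbrev Ed (d : ℕ) : Type := EuclideanSpace ℝ (Fin d)

/-- An integer vector, viewed as an element of `ℝ^d`. -/
def zVec {d : ℕ} (k : Fin d → ℤ) : Ed d := WithLp.toLp 2 (fun i => (k i : ℝ))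

/-- A matrix acting on `ℝ^d`. -/
def matVec {d : ℕ} (A : Matrix (Fin d) (Fin d) ℝ) (x : Ed d) : Ed d :=
  WithLp.toLp 2 (fun i => ∑ j, A i j * x j)

/-- The Wiener amalgam norm `‖f‖_{W(L^∞, ℓ¹)} = ∑_{n ∈ ℤ^d} ‖f·𝟙_{n+[0,1]^d}‖_{L^∞}`. -/
def amalgamNorm {d : ℕ} (f : Ed d → ℂ) : ℝ≥0∞ :=
  ∑' n : Fin d → ℤ,
    ⨆ x ∈ {x : Ed d | ∀ i, x i ∈ Set.Icc (n i : ℝ) ((n i : ℝ) + 1)}, (‖f x‖₊ : ℝ≥0∞)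

/-- The (unweighted) `ℓ^p` norm of a family of complex numbers, `p ∈ [1,∞]`. -/
def lqNorm {κ : Type*} (q : ℝ≥0∞) (c : κ → ℂ) : ℝ≥0∞ :=
  if q = ∞ then ⨆ k, (‖c k‖₊ : ℝ≥0∞)
  else (∑' k, (‖c k‖₊ : ℝ≥0∞) ^ q.toReal) ^ (1 / q.toReal)

namespace ENNReal

theorem tsum_mul_rpow_le {ι : Type*} {p : ℝ} (hp : 1 ≤ p) (a b : ι → ℝ≥0∞) :
    (∑' i, a i * b i) ^ p ≤ (∑' i, a i ^ p * b i) * (∑' i, b i) ^ (p - 1) := by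
  rcases hp.eq_or_lt with rfl | hp
  · simp
  let _ : MeasurableSpace ι := ⊤
  have hpq : p.HolderConjugate (p / (p - 1)) := .conjExponent hp
  set q := p / (p - 1)
  have hp0 : 0 < p := by linarith
  -- Hölder for the splitting `a b = (a b^{1/p}) b^{1/q}` with respect to counting measure
  have hHolder := ENNReal.lintegral_mul_le_Lp_mul_Lq Measure.count hpq
    (f := fun i => a i * b i ^ (1 / p)) (g := fun i => b i ^ (1 / q))
    measurable_from_top.aemeasurable measurable_from_top.aemeasurable
  have hsplit (i : ι) : a i * b i ^ (1 / p) * b i ^ (1 / q) = a i * b i := by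
    rw [mul_assoc, ← ENNReal.rpow_add_of_nonneg _ _ (by positivity)
      (one_div_pos.2 hpq.symm.pos).le, hpq.one_div_add_one_div, one_div_one, ENNReal.rpow_one]
  have hfst (i : ι) : (a i * b i ^ (1 / p)) ^ p = a i ^ p * b i := by
    rw [ENNReal.mul_rpow_of_nonneg _ _ hp0.le, ← ENNReal.rpow_mul, one_div_mul_cancel hp0.ne',
      ENNReal.rpow_one]
  have hsnd (i : ι) : (b i ^ (1 / q)) ^ q = b i := by
    rw [← ENNReal.rpow_mul, one_div_mul_cancel hpq.symm.pos.ne', ENNReal.rpow_one]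
  simp only [lintegral_count, Pi.mul_apply, hsplit, hfst, hsnd] at hHolder
  calc (∑' i, a i * b i) ^ p
      ≤ ((∑' i, a i ^ p * b i) ^ (1 / p) * (∑' i, b i) ^ (1 / q)) ^ p := by gcongr
    _ = (∑' i, a i ^ p * b i) * (∑' i, b i) ^ (p - 1) := by
      rw [ENNReal.mul_rpow_of_nonneg _ _ hp0.le, ← ENNReal.rpow_mul, ← ENNReal.rpow_mul,
        one_div_mul_cancel hp0.ne', ENNReal.rpow_one, one_div_mul_eq_div, hpq.div_conj_eq_sub_one]

theorem tsum_comp_le_mul_tsum_of_encard_fiber_le {α β : Type*} {F : α → β} {N : ℕ∞}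
    (hF : ∀ b, (F ⁻¹' {b}).encard ≤ N) (u : β → ℝ≥0∞) :
    ∑' a, u (F a) ≤ N * ∑' b, u b := by
  calc ∑' a, u (F a) = ∑' b, ∑' _ : F ⁻¹' {b}, u b := by
        rw [← ENNReal.tsum_fiberwise _ F]
        exact tsum_congr fun b => tsum_congr fun a => by rw [a.2]
    _ = ∑' b, (F ⁻¹' {b}).encard * u b := by simp_rw [ENNReal.tsum_set_const]
    _ ≤ ∑' b, N * u b := ENNReal.tsum_le_tsum fun b => by gcongr; exact hF b
    _ = N * ∑' b, u b := ENNReal.tsum_mul_left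

end ENNReal

theorem MeasureTheory.lintegral_tsum_mul_rpow_le {X ι : Type*} [MeasurableSpace X] [Countable ι]
    {μ : Measure X} {p : ℝ} (hp : 1 ≤ p) (a : ι → ℝ≥0∞) {b : ι → X → ℝ≥0∞}
    (hb : ∀ i, Measurable (b i)) {A B : ℝ≥0∞} (hA : ∀ x, ∑' i, b i x ≤ A)
    (hB : ∀ i, ∫⁻ x, b i x ∂μ ≤ B) :
    ∫⁻ x, (∑' i, a i * b i x) ^ p ∂μ ≤ B * A ^ (p - 1) * ∑' i, a i ^ p := by
  calc ∫⁻ x, (∑' i, a i * b i x) ^ p ∂μ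
      ≤ ∫⁻ x, (∑' i, a i ^ p * b i x) * A ^ (p - 1) ∂μ := by
        refine lintegral_mono fun x => (ENNReal.tsum_mul_rpow_le hp a _).trans ?_
        gcongr
        exact hA x
    _ = (∑' i, a i ^ p * ∫⁻ x, b i x ∂μ) * A ^ (p - 1) := by
        rw [lintegral_mul_const _ (.tsum fun i => (hb i).const_mul _),
          lintegral_tsum fun i => ((hb i).const_mul _).aemeasurable]
        simp_rw [lintegral_const_mul _ (hb _)]
    _ ≤ (∑' i, a i ^ p * B) * A ^ (p - 1) := by gcongr with i; exact hB i
    _ = B * A ^ (p - 1) * ∑' i, a i ^ p := by rw [ENNReal.tsum_mul_right]; ring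

namespace WienerAmalgam

variable {d : ℕ}

def cubeIndex (x : Ed d) : Fin d → ℤ := fun i => ⌊x i⌋

def cubeSup (f : Ed d → ℂ) (n : Fin d → ℤ) : ℝ≥0∞ :=
  ⨆ x ∈ {x : Ed d | ∀ i, x i ∈ Set.Icc (n i : ℝ) ((n i : ℝ) + 1)}, (‖f x‖₊ : ℝ≥0∞)

theorem enorm_le_cubeSup_cubeIndex (f : Ed d → ℂ) (x : Ed d) :
    ‖f x‖ₑ ≤ cubeSup f (cubeIndex x) :=
  le_biSup (fun y => (‖f y‖₊ : ℝ≥0∞)) fun i =>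
    ⟨Int.floor_le _, by push_cast [cubeIndex]; exact (Int.lt_floor_add_one _).le⟩

theorem cubeIndex_sub_zVec (x : Ed d) (k : Fin d → ℤ) :
    cubeIndex (x - zVec k) = cubeIndex x - k := by
  ext i
  exact Int.floor_sub_intCast (x i) (k i)

theorem tsum_enorm_sub_zVec_le_amalgamNorm (f : Ed d → ℂ) (x : Ed d) :
    ∑' k, ‖f (x - zVec k)‖ₑ ≤ amalgamNorm f :=
  calc ∑' k, ‖f (x - zVec k)‖ₑ
      ≤ ∑' k, cubeSup f (cubeIndex x - k) := ENNReal.tsum_le_tsum fun k => by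
        rw [← cubeIndex_sub_zVec]; exact enorm_le_cubeSup_cubeIndex f _
    _ = amalgamNorm f := (Equiv.subLeft (cubeIndex x)).tsum_eq (cubeSup f)

theorem measurable_cubeIndex : Measurable (cubeIndex : Ed d → Fin d → ℤ) :=
  measurable_pi_lambda _ fun i => Int.measurable_floor.comp (measurable_pi_apply i |>.comp
    (MeasurableEquiv.toLp 2 (Fin d → ℝ)).symm.measurable)

theorem volume_cubeIndex_preimage (n : Fin d → ℤ) : volume (cubeIndex ⁻¹' {n}) = 1 := by
  have hcube : cubeIndex ⁻¹' {n} = (MeasurableEquiv.toLp 2 (Fin d → ℝ)).symm ⁻¹'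
      Set.univ.pi fun i => Set.Ico (n i : ℝ) (n i + 1) := by
    ext x
    simp [cubeIndex, funext_iff, Int.floor_eq_iff]
  rw [hcube, (EuclideanSpace.volume_preserving_symm_measurableEquiv_toLp (Fin d)).measure_preimage
    (MeasurableSet.univ_pi fun i => measurableSet_Ico).nullMeasurableSet, volume_pi_pi]
  simp

theorem lintegral_enorm_le_amalgamNorm (f : Ed d → ℂ) : ∫⁻ x, ‖f x‖ₑ ≤ amalgamNorm f :=
  calc ∫⁻ x, ‖f x‖ₑ = ∑' n, ∫⁻ x in cubeIndex ⁻¹' {n}, ‖f x‖ₑ := by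
        rw [← lintegral_iUnion (fun n => measurable_cubeIndex (measurableSet_singleton n))
          (pairwise_disjoint_fiber cubeIndex), ← Set.preimage_iUnion, Set.iUnion_of_singleton,
          Set.preimage_univ, setLIntegral_univ]
    _ ≤ ∑' n, cubeSup f n := ENNReal.tsum_le_tsum fun n => by
        calc ∫⁻ x in cubeIndex ⁻¹' {n}, ‖f x‖ₑ ≤ ∫⁻ _ in cubeIndex ⁻¹' {n}, cubeSup f n :=
              setLIntegral_mono' (measurable_cubeIndex (measurableSet_singleton n)) fun x hx => by
                rw [← hx]; exact enorm_le_cubeSup_cubeIndex f x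
          _ = cubeSup f n := by rw [setLIntegral_const, volume_cubeIndex_preimage, mul_one]

theorem matVec_eq_toLpLin (A : Matrix (Fin d) (Fin d) ℝ) : matVec A = Matrix.toLpLin 2 2 A := rfl

theorem matVec_sub (A : Matrix (Fin d) (Fin d) ℝ) (x y : Ed d) :
    matVec A (x - y) = matVec A x - matVec A y := by
  simp [matVec_eq_toLpLin]

theorem matVec_matVec_inv {M : Matrix (Fin d) (Fin d) ℝ} (hM : IsUnit M.det) (x : Ed d) :
    matVec M (matVec M⁻¹ x) = x := by
  simp [matVec_eq_toLpLin, ← LinearMap.comp_apply, ← Matrix.toLpLin_mul_same,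
    Matrix.mul_nonsing_inv M hM]

theorem continuous_matVec (A : Matrix (Fin d) (Fin d) ℝ) : Continuous (matVec A) :=
  (Matrix.toLpLin 2 2 A).continuous_of_finiteDimensional

theorem lintegral_eq_mul_lintegral_comp_matVec {M : Matrix (Fin d) (Fin d) ℝ} (hM : IsUnit M.det)
    {φ : Ed d → ℝ≥0∞} (hφ : Measurable φ) :
    ∫⁻ x, φ x = ENNReal.ofReal |M.det| * ∫⁻ x, φ (matVec M x) := by
  have hdet : LinearMap.det (Matrix.toLpLin 2 2 M) = M.det := by
    rw [Matrix.toLpLin_eq_toLin, LinearMap.det_toLin]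
  have hmap := Measure.map_linearMap_addHaar_eq_smul_addHaar (volume : Measure (Ed d))
    (f := Matrix.toLpLin 2 2 M) (hdet ▸ hM.ne_zero)
  rw [← lintegral_map hφ (continuous_matVec M).measurable, matVec_eq_toLpLin, hmap, hdet,
    lintegral_smul_measure, smul_eq_mul, ← mul_assoc, ← ENNReal.ofReal_mul (abs_nonneg _),
    ← abs_mul, mul_inv_cancel₀ hM.ne_zero, abs_one, ENNReal.ofReal_one, one_mul]

theorem zVec_sub (k l : Fin d → ℤ) : zVec (k - l) = zVec k - zVec l := by
  ext i; simp [zVec]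

def shortLatticeVectors (M : Matrix (Fin d) (Fin d) ℝ) : Set (Fin d → ℤ) :=
  {m | ∀ i, |matVec M (zVec m) i| < 1}

attribute [local instance] Matrix.linftyOpNormedAddCommGroup in
theorem finite_shortLatticeVectors {M : Matrix (Fin d) (Fin d) ℝ} (hM : IsUnit M.det) :
    (shortLatticeVectors M).Finite := by
  set R := ⌈‖M⁻¹‖⌉
  refine (Set.Finite.pi (t := fun _ => Set.Icc (-R) R) fun _ => Set.finite_Icc _ _).subset ?_
  intro m hm i _
  set v : Fin d → ℝ := fun i => (m i : ℝ)
  have hMv : ‖M *ᵥ v‖ ≤ 1 := (pi_norm_le_iff_of_nonneg zero_le_one).2 fun i => (hm i).le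
  have hv : v = M⁻¹ *ᵥ (M *ᵥ v) := by rw [mulVec_mulVec, nonsing_inv_mul M hM, one_mulVec]
  have : |(m i : ℝ)| ≤ ‖M⁻¹‖ :=
    calc |(m i : ℝ)| ≤ ‖v‖ := norm_le_pi_norm v i
      _ = ‖M⁻¹ *ᵥ (M *ᵥ v)‖ := by rw [← hv]
      _ ≤ ‖M⁻¹‖ * ‖M *ᵥ v‖ := linfty_opNorm_mulVec _ _
      _ ≤ ‖M⁻¹‖ := mul_le_of_le_one_right (norm_nonneg _) hMv
  exact abs_le.1 (Int.cast_le.1 ((Int.cast_abs (R := ℝ) ▸ this).trans (Int.le_ceil _)))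

theorem encard_fiber_cubeIndex_sub_matVec_le (M : Matrix (Fin d) (Fin d) ℝ) (x : Ed d)
    (n : Fin d → ℤ) :
    ((fun k => cubeIndex (x - matVec M (zVec k))) ⁻¹' {n}).encard
      ≤ (shortLatticeVectors M).encard := by
  set S := (fun k => cubeIndex (x - matVec M (zVec k))) ⁻¹' {n}
  rcases S.eq_empty_or_nonempty with hS | ⟨k₀, hk₀⟩
  · simp [hS]
  refine Set.encard_le_encard_of_injOn (f := (· - k₀)) (fun k hk i => ?_) sub_left_injective.injOn
  have hfloor : ⌊(x - matVec M (zVec k₀)) i⌋ = ⌊(x - matVec M (zVec k)) i⌋ :=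
    congrFun ((hk₀ : _ = n).trans hk.symm) i
  have := Int.abs_sub_lt_one_of_floor_eq_floor hfloor
  rwa [← PiLp.sub_apply, sub_sub_sub_cancel_left, ← matVec_sub, ← zVec_sub] at this

def synthesis (M : Matrix (Fin d) (Fin d) ℝ) (g : Ed d → ℂ) (c : (Fin d → ℤ) → ℂ) (x : Ed d) : ℂ :=
  ∑' k, c k * g (x - matVec M (zVec k))

theorem tsum_enorm_sub_matVec_le_mul_amalgamNorm (M : Matrix (Fin d) (Fin d) ℝ) (g : Ed d → ℂ)
    (x : Ed d) :
    ∑' k, ‖g (x - matVec M (zVec k))‖ₑ ≤ (shortLatticeVectors M).encard * amalgamNorm g :=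
  (ENNReal.tsum_le_tsum fun _ => enorm_le_cubeSup_cubeIndex g _).trans <|
    ENNReal.tsum_comp_le_mul_tsum_of_encard_fiber_le
      (encard_fiber_cubeIndex_sub_matVec_le M x) (cubeSup g)

theorem tsum_enorm_sub_matVec_le_amalgamNorm_comp {M : Matrix (Fin d) (Fin d) ℝ}
    (hM : IsUnit M.det) (g : Ed d → ℂ) (x : Ed d) :
    ∑' k, ‖g (x - matVec M (zVec k))‖ₑ ≤ amalgamNorm (fun y => g (matVec M y)) := by
  have h (k : Fin d → ℤ) : x - matVec M (zVec k) = matVec M (matVec M⁻¹ x - zVec k) := by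
    rw [matVec_sub, matVec_matVec_inv hM]
  simpa only [h] using tsum_enorm_sub_zVec_le_amalgamNorm (fun y => g (matVec M y)) (matVec M⁻¹ x)

theorem lintegral_enorm_sub_matVec_le {M : Matrix (Fin d) (Fin d) ℝ} (hM : IsUnit M.det)
    {g : Ed d → ℂ} (hg : Measurable g) (k : Fin d → ℤ) :
    ∫⁻ x, ‖g (x - matVec M (zVec k))‖ₑ
      ≤ ENNReal.ofReal |M.det| * amalgamNorm (fun y => g (matVec M y)) := by
  rw [lintegral_sub_right_eq_self (fun x => ‖g x‖ₑ), lintegral_eq_mul_lintegral_comp_matVec hM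
    hg.enorm]
  gcongr
  exact lintegral_enorm_le_amalgamNorm _

theorem summable_norm_mul_sub_matVec {M : Matrix (Fin d) (Fin d) ℝ} (hM : IsUnit M.det)
    {g : Ed d → ℂ} (hgW : amalgamNorm g < ⊤) {c : (Fin d → ℤ) → ℂ} (hc : ∃ B, ∀ k, ‖c k‖ ≤ B)
    (x : Ed d) : Summable fun k => ‖c k * g (x - matVec M (zVec k))‖ := by
  obtain ⟨B, hB⟩ := hc
  have hN : ((shortLatticeVectors M).encard : ℝ≥0∞) ≠ ⊤ := by
    simpa using (finite_shortLatticeVectors hM).encard_lt_top.ne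
  refine tsum_enorm_ne_top_iff_summable_norm.1 (ne_top_of_le_ne_top
    (ENNReal.mul_ne_top (ENNReal.ofReal_ne_top (r := B)) (ENNReal.mul_ne_top hN hgW.ne)) ?_)
  calc ∑' k, ‖c k * g (x - matVec M (zVec k))‖ₑ
      ≤ ∑' k, ENNReal.ofReal B * ‖g (x - matVec M (zVec k))‖ₑ := by
        gcongr with k
        rw [enorm_mul, ← ofReal_norm]
        gcongr
        exact hB k
    _ = ENNReal.ofReal B * ∑' k, ‖g (x - matVec M (zVec k))‖ₑ := ENNReal.tsum_mul_left
    _ ≤ ENNReal.ofReal B * ((shortLatticeVectors M).encard * amalgamNorm g) := by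
        gcongr
        exact tsum_enorm_sub_matVec_le_mul_amalgamNorm M g x

theorem enorm_synthesis_le (M : Matrix (Fin d) (Fin d) ℝ) (g : Ed d → ℂ)
    (c : (Fin d → ℤ) → ℂ) (x : Ed d) :
    ‖synthesis M g c x‖ₑ ≤ ∑' k, ‖c k‖ₑ * ‖g (x - matVec M (zVec k))‖ₑ := by
  simpa only [synthesis, enorm_mul] using
    enorm_tsum_le_tsum_enorm (f := fun k => c k * g (x - matVec M (zVec k)))

theorem eLpNorm_top_synthesis_le {M : Matrix (Fin d) (Fin d) ℝ} (hM : IsUnit M.det)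
    (g : Ed d → ℂ) (c : (Fin d → ℤ) → ℂ) :
    eLpNorm (synthesis M g c) ∞ volume
      ≤ amalgamNorm (fun y => g (matVec M y)) * ⨆ k, ‖c k‖ₑ := by
  rw [eLpNorm_exponent_top]
  refine essSup_le_of_ae_le _ (ae_of_all _ fun x => ?_)
  calc ‖synthesis M g c x‖ₑ ≤ ∑' k, ‖c k‖ₑ * ‖g (x - matVec M (zVec k))‖ₑ := enorm_synthesis_le ..
    _ ≤ ∑' k, (⨆ j, ‖c j‖ₑ) * ‖g (x - matVec M (zVec k))‖ₑ := by
        gcongr with k; exact le_iSup (fun j => ‖c j‖ₑ) k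
    _ ≤ amalgamNorm (fun y => g (matVec M y)) * ⨆ k, ‖c k‖ₑ := by
        rw [ENNReal.tsum_mul_left, mul_comm]
        gcongr
        exact tsum_enorm_sub_matVec_le_amalgamNorm_comp hM g x

theorem eLpNorm_synthesis_le {M : Matrix (Fin d) (Fin d) ℝ} (hM : IsUnit M.det) {g : Ed d → ℂ}
    (hg : Measurable g) {p : ℝ≥0∞} (hp : 1 ≤ p) (c : (Fin d → ℤ) → ℂ) :
    eLpNorm (synthesis M g c) p volume
      ≤ ENNReal.ofReal |M.det| ^ (1 / p).toReal * amalgamNorm (fun y => g (matVec M y))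
        * lqNorm p c := by
  rcases eq_or_ne p ⊤ with rfl | hpt
  · simpa [lqNorm, mul_comm, enorm_eq_nnnorm] using eLpNorm_top_synthesis_le hM g c
  set r := p.toReal
  have hr : 1 ≤ r := by simpa using ENNReal.toReal_mono hpt hp
  set A := amalgamNorm (fun y => g (matVec M y))
  set S := ∑' k, ‖c k‖ₑ ^ r
  have hAr : A * A ^ (r - 1) = A ^ r := by
    nth_rewrite 1 [← ENNReal.rpow_one A]
    rw [← ENNReal.rpow_add_of_nonneg _ _ zero_le_one (by linarith), add_sub_cancel]
  have hint : ∫⁻ x, ‖synthesis M g c x‖ₑ ^ r ≤ ENNReal.ofReal |M.det| * A ^ r * S :=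
    calc ∫⁻ x, ‖synthesis M g c x‖ₑ ^ r
        ≤ ∫⁻ x, (∑' k, ‖c k‖ₑ * ‖g (x - matVec M (zVec k))‖ₑ) ^ r := by
          gcongr with x
          exact enorm_synthesis_le M g c x
      _ ≤ ENNReal.ofReal |M.det| * A * A ^ (r - 1) * S :=
          lintegral_tsum_mul_rpow_le hr _ (fun k => (hg.comp (measurable_id.sub_const _)).enorm)
            (tsum_enorm_sub_matVec_le_amalgamNorm_comp hM g) (lintegral_enorm_sub_matVec_le hM hg)
      _ = ENNReal.ofReal |M.det| * A ^ r * S := by rw [mul_assoc _ A, hAr]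
  have hr0 : 0 < r := by linarith
  rw [eLpNorm_eq_lintegral_rpow_enorm_toReal (by positivity) hpt, lqNorm, if_neg hpt,
    one_div p, ENNReal.toReal_inv]
  calc (∫⁻ x, ‖synthesis M g c x‖ₑ ^ r) ^ (1 / r)
      ≤ (ENNReal.ofReal |M.det| * A ^ r * S) ^ (1 / r) := by gcongr
    _ = ENNReal.ofReal |M.det| ^ r⁻¹ * A * S ^ (1 / r) := by
      rw [ENNReal.mul_rpow_of_nonneg _ _ (by positivity),
        ENNReal.mul_rpow_of_nonneg _ _ (by positivity), ← ENNReal.rpow_mul,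
        mul_one_div_cancel hr0.ne', ENNReal.rpow_one, one_div]

end WienerAmalgam

/-- Let `g : ℝ^d → ℂ` be continuous with `‖g‖_{W(L^∞,ℓ¹)} < ∞` and let
`M ∈ GL(d,ℝ)`.  Then `D_{M,g} : c ↦ ∑_{k ∈ ℤ^d} c_k · T_{Mk} g` is bounded from `ℓ^∞(ℤ^d)`
into `L^∞(ℝ^d)`, with the series converging pointwise absolutely; and for every `p ∈ [1,∞]`,
`D_{M,g} : ℓ^p(ℤ^d) → L^p(ℝ^d)` is well-defined and bounded with
`‖D_{M,g}‖_{ℓ^p → L^p} ≤ |det M|^{1/p} · ‖g ∘ M‖_{W(L^∞,ℓ¹)}`. -/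
theorem stmt2 {d : ℕ} (g : Ed d → ℂ) (hgc : Continuous g) (hgW : amalgamNorm g < ⊤)
    (M : Matrix (Fin d) (Fin d) ℝ) (hM : IsUnit M.det) :
    (∀ c : (Fin d → ℤ) → ℂ, (∃ B, ∀ k, ‖c k‖ ≤ B) →
      ∀ x : Ed d, Summable fun k => ‖c k * g (x - matVec M (zVec k))‖) ∧
    (∀ p : ℝ≥0∞, 1 ≤ p → ∀ c : (Fin d → ℤ) → ℂ,
      eLpNorm (fun x : Ed d => ∑' k, c k * g (x - matVec M (zVec k))) p volume
        ≤ ENNReal.ofReal |M.det| ^ (1 / p).toReal *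
            amalgamNorm (fun x => g (matVec M x)) * lqNorm p c) :=
  ⟨fun _ hc x => WienerAmalgam.summable_norm_mul_sub_matVec hM hgW hc x,
    fun _ hp c => WienerAmalgam.eLpNorm_synthesis_le hM hgc.measurable hp c⟩
end
end

section
/- Let m ∈ ℕ and let U ⊆ ℝ be open. There is a constant C_m with 1 ≤ C_m ≤ 3·√m·((0.8/e)·m²/ln(1+m))^m such that the following holds: if f ∈ C^m(U) never vanishes on U, and if A > 0, K ≥ 0, and x₀ ∈ U satisfy |f(x₀)| ≥ A^{-1} and |f^{(ℓ)}(x₀)| ≤ K for all 1 ≤ ℓ ≤ m, then the reciprocal F := 1/f satisfies |F^{(ℓ)}(x₀)| ≤ C_m·A·max{A·K, (A·K)^ℓ} for all 1 ≤ ℓ ≤ m. -/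
/-!
Differentiating `f · f⁻¹ = 1` with the Leibniz rule gives, at `x₀` and for `n ≥ 1`,
`f F⁽ⁿ⁾ = -∑_{i=1}^{n} C(n, i) f⁽ⁱ⁾ F⁽ⁿ⁻ⁱ⁾`. With `|f(x₀)| ≥ A⁻¹`, `|f⁽ⁱ⁾(x₀)| ≤ K` and
`B = A K`, induction on `n` gives `|F⁽ⁿ⁾(x₀)| ≤ a_n A max(B, Bⁿ)`, where
`a_n = ∑_{i=1}^{n} C(n, i) a_{n-i}` are the Fubini (ordered Bell) numbers, so `C_m = a_m` works.
Finally `a_m ≤ m! 2^m`, and Stirling's bound `m! ≤ e √m (m/e)^m` together with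
`log (1 + m) ≤ 2m/5` gives the stated upper bound for `m ≥ 5`; the cases `m ≤ 4` are numerical.
-/

open Finset Real Topology
open scoped Nat

namespace Nat

def fubini : ℕ → ℕ
  | 0 => 1
  | n + 1 => ∑ i ∈ range (n + 1), (n + 1).choose (i + 1) * fubini (n - i)

@[simp] lemma fubini_zero : fubini 0 = 1 := by rw [fubini]

lemma fubini_succ (n : ℕ) :
    fubini (n + 1) = ∑ i ∈ range (n + 1), (n + 1).choose (i + 1) * fubini (n - i) := by
  rw [fubini]

lemma fubini_le_fubini_succ (n : ℕ) : fubini n ≤ fubini (n + 1) := by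
  rw [fubini_succ]
  calc fubini n ≤ (n + 1).choose 1 * fubini (n - 0) := by
        simpa using Nat.le_mul_of_pos_left _ n.succ_pos
    _ ≤ _ := single_le_sum (f := fun i => (n + 1).choose (i + 1) * fubini (n - i))
        (fun _ _ => Nat.zero_le _) (mem_range.mpr n.succ_pos)

lemma fubini_mono : Monotone fubini := monotone_nat_of_le_succ fubini_le_fubini_succ

lemma one_le_fubini (n : ℕ) : 1 ≤ fubini n := fubini_zero ▸ fubini_mono (Nat.zero_le n)

lemma fubini_le_factorial_mul_two_pow (n : ℕ) : fubini n ≤ n ! * 2 ^ n := by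
  induction n using Nat.strong_induction_on with
  | _ n ih =>
    rcases n with _ | k
    · simp
    have hterm : ∀ i ∈ range (k + 1),
        (k + 1).choose (i + 1) * fubini (k - i) ≤ (k + 1)! * 2 ^ (k - i) := by
      intro i hi
      have hik : i + 1 ≤ k + 1 := by simpa using hi
      have hsub : k + 1 - (i + 1) = k - i := by omega
      calc (k + 1).choose (i + 1) * fubini (k - i)
          ≤ (k + 1).choose (i + 1) * ((k - i)! * 2 ^ (k - i)) :=
            Nat.mul_le_mul_left _ (ih _ (by omega))
        _ ≤ (k + 1).choose (i + 1) * (i + 1)! * (k - i)! * 2 ^ (k - i) := by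
            rw [← mul_assoc]
            gcongr
            exact Nat.le_mul_of_pos_right _ (Nat.factorial_pos _)
        _ = (k + 1)! * 2 ^ (k - i) := by
            rw [← hsub, Nat.choose_mul_factorial_mul_factorial hik]
    have hgeom : ∑ i ∈ range (k + 1), 2 ^ (k - i) < 2 ^ (k + 1) := by
      have hreflect := sum_range_reflect (fun j => 2 ^ j) (k + 1)
      simp only [add_tsub_cancel_right] at hreflect
      rw [hreflect]
      exact Nat.geomSum_lt le_rfl (fun j hj => mem_range.mp hj)
    calc fubini (k + 1) ≤ ∑ i ∈ range (k + 1), (k + 1)! * 2 ^ (k - i) := by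
          rw [fubini_succ]; exact sum_le_sum hterm
      _ ≤ (k + 1)! * 2 ^ (k + 1) := by
          rw [← mul_sum]; exact Nat.mul_le_mul_left _ hgeom.le

end Nat

theorem factorial_le_exp_one_mul_sqrt_mul_pow {n : ℕ} (hn : n ≠ 0) :
    (n ! : ℝ) ≤ exp 1 * √n * (n / exp 1) ^ n := by
  obtain ⟨k, rfl⟩ := Nat.exists_eq_succ_of_ne_zero hn
  have hseq : Stirling.stirlingSeq (k + 1) ≤ exp 1 / √2 := by
    simpa [Stirling.stirlingSeq_one] using Stirling.stirlingSeq'_antitone (Nat.zero_le k)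
  have hden : 0 < √(2 * (k + 1 : ℕ)) * ((k + 1 : ℕ) / exp 1) ^ (k + 1) := by positivity
  calc ((k + 1)! : ℝ)
      = Stirling.stirlingSeq (k + 1) * (√(2 * (k + 1 : ℕ)) * ((k + 1 : ℕ) / exp 1) ^ (k + 1)) :=
        (div_mul_cancel₀ _ hden.ne').symm
    _ ≤ exp 1 / √2 * (√(2 * (k + 1 : ℕ)) * ((k + 1 : ℕ) / exp 1) ^ (k + 1)) := by gcongr
    _ = exp 1 * √(k + 1 : ℕ) * ((k + 1 : ℕ) / exp 1) ^ (k + 1) := by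
        rw [sqrt_mul zero_le_two]
        field_simp

theorem log_one_add_le_of_five_le {x : ℝ} (hx : 5 ≤ x) : log (1 + x) ≤ 0.4 * x := by
  rw [log_le_iff_le_exp (by linarith)]
  have htaylor := sum_le_exp_of_nonneg (x := 0.4 * x) (by linarith) 4
  norm_num [sum_range_succ, Nat.factorial] at htaylor
  nlinarith

theorem three_mul_mul_pow_le_of_mul_log_le {m : ℕ} (hm : 1 ≤ m) {s c : ℝ} (hs : s ≤ √m)
    (hc₀ : 0 ≤ c) (hc : c * log (1 + m) * exp 1 ≤ 0.8 * m ^ 2) :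
    3 * s * c ^ m ≤ 3 * √m * (0.8 / exp 1 * m ^ 2 / log (1 + m)) ^ m := by
  have hlog : 0 < log (1 + m) := log_pos (by norm_cast; omega)
  have hc' : c ≤ 0.8 / exp 1 * m ^ 2 / log (1 + m) := by
    rw [le_div_iff₀ hlog, div_mul_eq_mul_div, le_div_iff₀ (exp_pos 1)]
    exact hc
  gcongr

theorem fubini_le_three_mul_sqrt_mul_pow {m : ℕ} (hm : 1 ≤ m) :
    (m.fubini : ℝ) ≤ 3 * √m * (0.8 / exp 1 * m ^ 2 / log (1 + m)) ^ m := by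
  suffices ∃ s c : ℝ, (m.fubini : ℝ) ≤ 3 * s * c ^ m ∧ s ≤ √m ∧ 0 ≤ c ∧
      c * log (1 + m) * exp 1 ≤ 0.8 * m ^ 2 by
    obtain ⟨s, c, hfs, hs, hc₀, hc⟩ := this
    exact hfs.trans (three_mul_mul_pow_le_of_mul_log_le hm hs hc₀ hc)
  have he := exp_one_lt_d9
  by_cases hm5 : 5 ≤ m
  · refine ⟨exp 1 * √m / 3, 2 * m / exp 1, ?_, ?_, by positivity, ?_⟩
    · calc (m.fubini : ℝ) ≤ m ! * 2 ^ m := by exact_mod_cast Nat.fubini_le_factorial_mul_two_pow m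
        _ ≤ exp 1 * √m * (m / exp 1) ^ m * 2 ^ m := by
            gcongr; exact factorial_le_exp_one_mul_sqrt_mul_pow (by omega)
        _ = 3 * (exp 1 * √m / 3) * (2 * m / exp 1) ^ m := by ring
    · have : exp 1 ≤ 3 := by linarith
      have : 0 ≤ √m := sqrt_nonneg _
      nlinarith
    · have h := log_one_add_le_of_five_le (x := m) (by exact_mod_cast hm5)
      rw [div_mul_eq_mul_div, div_mul_cancel₀ _ (exp_pos 1).ne']
      nlinarith
  have hl2 := log_two_lt_d9
  have hl2' : 0 < log 2 := log_pos one_lt_two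
  interval_cases m
  · refine ⟨1, 1 / 3, by norm_num [Nat.fubini_succ], by norm_num, by norm_num, ?_⟩
    norm_num
    nlinarith [mul_lt_mul'' hl2 he hl2'.le (exp_pos 1).le]
  · have hl3 : log 3 ≤ 2 * log 2 := by
      rw [← log_rpow two_pos]; exact log_le_log (by norm_num) (by norm_num)
    refine ⟨1.41, 0.845, by norm_num [Nat.fubini_succ, sum_range_succ], ?_, by norm_num,
      ?_⟩
    · exact (le_sqrt (by norm_num) (by norm_num)).mpr (by norm_num)
    norm_num
    nlinarith [mul_lt_mul'' hl2 he hl2'.le (exp_pos 1).le, log_pos (by norm_num : (1:ℝ) < 3)]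
  · have hl4 : log 4 = 2 * log 2 := by
      rw [show (4 : ℝ) = 2 ^ 2 by norm_num, log_pow]; norm_num
    refine ⟨1, 1.8, by norm_num [Nat.fubini_succ, sum_range_succ, Nat.choose], ?_,
      by norm_num, ?_⟩
    · exact (le_sqrt (by norm_num) (by norm_num)).mpr (by norm_num)
    norm_num [hl4]
    nlinarith [mul_lt_mul'' hl2 he hl2'.le (exp_pos 1).le]
  · have hl5 : log 5 ≤ 3 * log 2 := by
      rw [← log_rpow two_pos]; exact log_le_log (by norm_num) (by norm_num)
    refine ⟨2, 2, by norm_num [Nat.fubini_succ, sum_range_succ, Nat.choose], ?_,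
      by norm_num, ?_⟩
    · exact (le_sqrt (by norm_num) (by norm_num)).mpr (by norm_num)
    norm_num
    nlinarith [mul_lt_mul'' hl2 he hl2'.le (exp_pos 1).le, log_pos (by norm_num : (1:ℝ) < 5)]

theorem sum_choose_mul_iteratedDeriv_mul_iteratedDeriv_inv {𝕜 𝕜' : Type*}
    [NontriviallyNormedField 𝕜] [NormedField 𝕜'] [NormedAlgebra 𝕜 𝕜'] {f : 𝕜 → 𝕜'} {x : 𝕜}
    {n : ℕ} (hn : n ≠ 0) (hf : ContDiffAt 𝕜 n f x) (hfx : f x ≠ 0) :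
    ∑ i ∈ range (n + 1), (n.choose i : 𝕜') * iteratedDeriv i f x *
      iteratedDeriv (n - i) (fun y => (f y)⁻¹) x = 0 := by
  have hone : (fun y => f y * (f y)⁻¹) =ᶠ[𝓝 x] fun _ => 1 := by
    filter_upwards [hf.continuousAt.eventually_ne hfx] with y hy using mul_inv_cancel₀ hy
  rw [← iteratedDeriv_fun_mul (g := fun y => (f y)⁻¹) hf (hf.inv hfx), hone.iteratedDeriv_eq,
    iteratedDeriv_const, if_neg hn]

theorem mul_max_pow_le_max_pow {B : ℝ} (hB : 0 ≤ B) {k n : ℕ} (hk : 1 ≤ k) (hkn : k ≤ n) :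
    B * max B (B ^ k) ≤ max B (B ^ (n + 1)) := by
  rcases le_total B 1 with hB1 | hB1
  · exact le_max_of_le_left (mul_le_of_le_one_right hB (max_le hB1 (pow_le_one₀ hB hB1)))
  · rw [max_eq_right (le_self_pow₀ hB1 (by omega))]
    exact le_max_of_le_right (by rw [← pow_succ']; exact pow_le_pow_right₀ hB1 (by omega))

section Recursion

variable {𝕜 : Type*} [NormedField 𝕜] {a b : ℕ → 𝕜} {A K : ℝ}

theorem norm_le_of_sum_choose_mul_eq_zero (hA : 0 < A) (ha₀ : A⁻¹ ≤ ‖a 0‖) {n : ℕ}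
    (h : ∑ i ∈ range (n + 2), ((n + 1).choose i : 𝕜) * a i * b (n + 1 - i) = 0) :
    ‖b (n + 1)‖ ≤
      A * ∑ i ∈ range (n + 1), (n + 1).choose (i + 1) * (‖a (i + 1)‖ * ‖b (n - i)‖) := by
  rw [sum_range_succ'] at h
  simp only [Nat.choose_zero_right, Nat.cast_one, one_mul, Nat.sub_zero,
    Nat.add_sub_add_right] at h
  have hb : a 0 * b (n + 1) = -∑ i ∈ range (n + 1),
      ((n + 1).choose (i + 1) : 𝕜) * a (i + 1) * b (n - i) := eq_neg_of_add_eq_zero_right h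
  calc ‖b (n + 1)‖ ≤ A * (‖a 0‖ * ‖b (n + 1)‖) := by
        rw [← mul_assoc]
        refine le_mul_of_one_le_left (norm_nonneg _) ?_
        rwa [← inv_le_iff_one_le_mul₀' hA]
    _ ≤ _ := by
        rw [← norm_mul, hb, norm_neg]
        gcongr
        refine (norm_sum_le _ _).trans (sum_le_sum fun i _ => ?_)
        rw [norm_mul, norm_mul, mul_assoc]
        gcongr
        simpa using Nat.norm_cast_le (α := 𝕜) _

theorem norm_le_fubini_mul_of_sum_choose_mul_eq_zero {m : ℕ} (hA : 0 < A) (hK : 0 ≤ K)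
    (ha₀ : A⁻¹ ≤ ‖a 0‖) (hb₀ : ‖b 0‖ ≤ A) (ha : ∀ i, 1 ≤ i → i ≤ m → ‖a i‖ ≤ K)
    (hab : ∀ n, 1 ≤ n → n ≤ m → ∑ i ∈ range (n + 1), (n.choose i : 𝕜) * a i * b (n - i) = 0) :
    ∀ n, 1 ≤ n → n ≤ m → ‖b n‖ ≤ n.fubini * A * max (A * K) ((A * K) ^ n) := by
  set B := A * K
  have hB : 0 ≤ B := mul_nonneg hA.le hK
  intro n
  induction n using Nat.strong_induction_on with
  | _ n ih =>
    intro hn hnm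
    obtain ⟨k, rfl⟩ := Nat.exists_eq_add_of_le' hn
    have hterm : ∀ j ≤ k, K * ‖b j‖ ≤ j.fubini * max B (B ^ (k + 1)) := by
      intro j hjk
      rcases Nat.eq_zero_or_pos j with rfl | hj
      · simpa [B, mul_comm] using
          le_max_of_le_left (mul_le_mul_of_nonneg_left hb₀ hK)
      · calc K * ‖b j‖ ≤ K * (j.fubini * A * max B (B ^ j)) := by
              gcongr; exact ih j (by omega) hj (by omega)
          _ = j.fubini * (B * max B (B ^ j)) := by ring
          _ ≤ j.fubini * max B (B ^ (k + 1)) := by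
              gcongr; exact mul_max_pow_le_max_pow hB hj hjk
    calc ‖b (k + 1)‖
        ≤ A * ∑ i ∈ range (k + 1), (k + 1).choose (i + 1) * (‖a (i + 1)‖ * ‖b (k - i)‖) :=
          norm_le_of_sum_choose_mul_eq_zero hA ha₀ (hab (k + 1) hn hnm)
      _ ≤ A * ∑ i ∈ range (k + 1),
            (k + 1).choose (i + 1) * ((k - i).fubini * max B (B ^ (k + 1))) := by
          refine mul_le_mul_of_nonneg_left (sum_le_sum fun i hi =>
            mul_le_mul_of_nonneg_left ?_ (Nat.cast_nonneg _)) hA.le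
          calc ‖a (i + 1)‖ * ‖b (k - i)‖ ≤ K * ‖b (k - i)‖ := by
                gcongr; exact ha _ (by omega) (by simp at hi; omega)
            _ ≤ _ := hterm _ (by omega)
      _ = (k + 1).fubini * A * max B (B ^ (k + 1)) := by
          rw [Nat.fubini_succ, mul_comm]
          push_cast
          simp only [sum_mul]
          exact sum_congr rfl fun i _ => by ring

end Recursion

/-- For `m ∈ ℕ` and `U ⊆ ℝ` open, there is a constant `C_m` with
`1 ≤ C_m ≤ 3·√m·((0.8/e)·m²/ln(1+m))^m` such that: if `f ∈ C^m(U)` never vanishes on `U`, and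
if `A > 0`, `K ≥ 0` and `x₀ ∈ U` satisfy `|f(x₀)| ≥ A⁻¹` and `|f^{(ℓ)}(x₀)| ≤ K` for
`1 ≤ ℓ ≤ m`, then `F = 1/f` satisfies `|F^{(ℓ)}(x₀)| ≤ C_m · A · max {A·K, (A·K)^ℓ}` for all
`1 ≤ ℓ ≤ m`. -/
theorem stmt16 (m : ℕ) (hm : 1 ≤ m) (U : Set ℝ) (hU : IsOpen U) :
    ∃ Cm : ℝ, 1 ≤ Cm ∧
      Cm ≤ 3 * Real.sqrt m * ((0.8 / Real.exp 1) * (m : ℝ) ^ 2 / Real.log (1 + m)) ^ m ∧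
      ∀ f : ℝ → ℂ, ContDiffOn ℝ m f U → (∀ x ∈ U, f x ≠ 0) →
        ∀ (A K : ℝ) (x₀ : ℝ), x₀ ∈ U → 0 < A → 0 ≤ K →
          A⁻¹ ≤ ‖f x₀‖ → (∀ ℓ, 1 ≤ ℓ → ℓ ≤ m → ‖iteratedDeriv ℓ f x₀‖ ≤ K) →
          ∀ ℓ, 1 ≤ ℓ → ℓ ≤ m →
            ‖iteratedDeriv ℓ (fun x => (f x)⁻¹) x₀‖ ≤ Cm * A * max (A * K) ((A * K) ^ ℓ) := by
  refine ⟨m.fubini, mod_cast Nat.one_le_fubini m, fubini_le_three_mul_sqrt_mul_pow hm, ?_⟩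
  intro f hf hne A K x₀ hx₀ hA hK hfA hder ℓ hℓ hℓm
  have hfx₀ : ContDiffAt ℝ m f x₀ := hf.contDiffAt (hU.mem_nhds hx₀)
  have hF₀ : ‖iteratedDeriv 0 (fun x => (f x)⁻¹) x₀‖ ≤ A := by
    rw [iteratedDeriv_zero, norm_inv]
    exact inv_le_of_inv_le₀ hA hfA
  have hleibniz (n : ℕ) (hn : 1 ≤ n) (hnm : n ≤ m) :=
    sum_choose_mul_iteratedDeriv_mul_iteratedDeriv_inv (n := n) (by omega)
      (hfx₀.of_le (by exact_mod_cast hnm)) (hne x₀ hx₀)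
  calc ‖iteratedDeriv ℓ (fun x => (f x)⁻¹) x₀‖
      ≤ ℓ.fubini * A * max (A * K) ((A * K) ^ ℓ) :=
        norm_le_fubini_mul_of_sum_choose_mul_eq_zero (a := (iteratedDeriv · f x₀))
          (b := (iteratedDeriv · (fun x => (f x)⁻¹) x₀))
          hA hK (by simpa using hfA) hF₀ hder hleibniz ℓ hℓ hℓm
    _ ≤ m.fubini * A * max (A * K) ((A * K) ^ ℓ) := by
        have : 0 ≤ max (A * K) ((A * K) ^ ℓ) := (mul_nonneg hA.le hK).trans (le_max_left _ _)
        gcongr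
        exact Nat.fubini_mono hℓm
end

section
/- For every d ∈ ℕ, every η ∈ ℝ^d, and every A ∈ GL(d,ℝ): ∑_{k∈ℤ^d} (1 + |η + A k|)^{-(d+1)} ≤ (d+1)·2^{1+2d}·max{1, ‖A^{-1}‖^{d+1}}. -/
open MeasureTheory Matrix
open scoped ENNReal

noncomputable section

/-- The operator norm of a matrix, with respect to the Euclidean norm. -/
def matOpNorm {d : ℕ} (A : Matrix (Fin d) (Fin d) ℝ) : ℝ :=
  ⨆ x : Metric.closedBall (0 : Ed d) 1, ‖matVec A (x : Ed d)‖

/-!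
Summation by parts. With `r = ‖η + A k‖` and `m = ⌊r⌋`, telescoping gives
`(1 + r)^{-(d+1)} ≤ (m + 1)^{-(d+1)} ≤ ∑_{n ≥ m} (d+1) (n+1)^{-(d+2)}`, and `n ≥ m` only needs
`r < n + 1`. Exchanging the two sums, the `n`-th term is weighted by the number of `k` with
`‖η + A k‖ < n + 1`; for these, `k + A⁻¹ η` lies in a cube of half-side `‖A⁻¹‖ (n + 1)`, which
contains at most `(3 M (n + 1))^d` lattice points, `M = max 1 ‖A⁻¹‖`. What is left is
`(d + 1) (3 M)^d ∑ (n + 1)^{-2} ≤ 2 (d + 1) (3 M)^d`.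
-/

open Filter Topology

lemma inv_pow_sub_inv_add_one_pow_le {x : ℝ} (hx : 0 < x) (n : ℕ) :
    (x ^ n)⁻¹ - ((x + 1) ^ n)⁻¹ ≤ n * (x ^ (n + 1))⁻¹ := by
  have hx1 : 0 < x + 1 := by linarith
  have bernoulli : 1 - n / (x + 1) ≤ (x / (x + 1)) ^ n := by
    have h := one_add_mul_le_pow (a := -(x + 1)⁻¹) (by
      have : (x + 1)⁻¹ ≤ 1 := inv_le_one_of_one_le₀ (by linarith)
      linarith) n
    have e : 1 + -(x + 1)⁻¹ = x / (x + 1) := by field_simp; ring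
    rwa [e, mul_neg, ← sub_eq_add_neg, ← div_eq_mul_inv] at h
  have key : (x ^ n)⁻¹ - ((x + 1) ^ n)⁻¹ = (x ^ n)⁻¹ * (1 - (x / (x + 1)) ^ n) := by
    rw [div_pow, mul_sub, mul_one, ← mul_div_assoc, inv_mul_cancel₀ (by positivity), one_div]
  calc (x ^ n)⁻¹ - ((x + 1) ^ n)⁻¹ = (x ^ n)⁻¹ * (1 - (x / (x + 1)) ^ n) := key
    _ ≤ (x ^ n)⁻¹ * (n / (x + 1)) := by gcongr; linarith
    _ ≤ (x ^ n)⁻¹ * (n / x) := by gcongr; linarith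
    _ = n * (x ^ (n + 1))⁻¹ := by rw [pow_succ]; field_simp

lemma ENNReal.ofReal_le_tsum_of_sub_succ_le {g h : ℕ → ℝ} (hg : Tendsto g atTop (𝓝 0))
    (hgh : ∀ n, g n - g (n + 1) ≤ h n) : ENNReal.ofReal (g 0) ≤ ∑' n, ENNReal.ofReal (h n) := by
  have partial_sum (N : ℕ) : ENNReal.ofReal (g 0 - g N) ≤ ∑' n, ENNReal.ofReal (h n) :=
    calc ENNReal.ofReal (g 0 - g N) ≤ ENNReal.ofReal (∑ n ∈ Finset.range N, h n) := by
          rw [← Finset.sum_range_sub']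
          exact ENNReal.ofReal_le_ofReal (Finset.sum_le_sum fun n _ => hgh n)
      _ ≤ ∑ n ∈ Finset.range N, ENNReal.ofReal (h n) :=
          Finset.le_sum_of_subadditive _ ENNReal.ofReal_zero.le
            (fun _ _ => ENNReal.ofReal_add_le) _ _
      _ ≤ ∑' n, ENNReal.ofReal (h n) := ENNReal.sum_le_tsum _
  have hlim := (ENNReal.continuous_ofReal.tendsto _).comp ((tendsto_const_nhds (x := g 0)).sub hg)
  rw [sub_zero] at hlim
  exact le_of_tendsto' hlim partial_sum

lemma ofReal_inv_one_add_pow_le_tsum {r : ℝ} (hr : 0 ≤ r) {n : ℕ} (hn : n ≠ 0) :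
    ENNReal.ofReal (((1 + r) ^ n)⁻¹) ≤
      ∑' k : ℕ, if r < k + 1 then ENNReal.ofReal (n * (((k : ℝ) + 1) ^ (n + 1))⁻¹) else 0 := by
  set m := ⌊r⌋₊
  have hrm : r < m + 1 := Nat.lt_floor_add_one r
  have telescope : ENNReal.ofReal ((((m : ℝ) + 1) ^ n)⁻¹) ≤
      ∑' j : ℕ, ENNReal.ofReal (n * ((((j + m : ℕ) : ℝ) + 1) ^ (n + 1))⁻¹) := by
    refine le_of_eq_of_le (by simp) <| ENNReal.ofReal_le_tsum_of_sub_succ_le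
      (g := fun j : ℕ => ((((j + m : ℕ) : ℝ) + 1) ^ n)⁻¹) ?_ fun j => ?_
    · exact tendsto_inv_atTop_zero.comp <| (tendsto_pow_atTop hn).comp <|
        tendsto_atTop_add_const_right _ 1 <|
          tendsto_natCast_atTop_atTop.comp (tendsto_add_atTop_nat m)
    · have hcast : (((j + 1 + m : ℕ) : ℝ) + 1) = ((j + m : ℕ) : ℝ) + 1 + 1 := by push_cast; ring
      simpa only [hcast] using
        inv_pow_sub_inv_add_one_pow_le (x := ((j + m : ℕ) : ℝ) + 1) (by positivity) n
  calc ENNReal.ofReal (((1 + r) ^ n)⁻¹) ≤ ENNReal.ofReal ((((m : ℝ) + 1) ^ n)⁻¹) := by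
        refine ENNReal.ofReal_le_ofReal
          (inv_anti₀ (by positivity) (pow_le_pow_left₀ (by positivity) ?_ n))
        linarith [Nat.floor_le hr]
    _ ≤ _ := telescope
    _ ≤ _ := by
        refine le_of_eq_of_le ?_ (ENNReal.tsum_comp_le_tsum_of_injective (add_left_injective m) _)
        refine tsum_congr fun j => ?_
        rw [if_pos]
        push_cast
        linarith [(j.cast_nonneg : (0 : ℝ) ≤ j)]

lemma Int.card_Icc_ceil_floor_le {a b : ℝ} (hab : 0 ≤ b - a + 1) :
    ((Finset.Icc ⌈a⌉ ⌊b⌋).card : ℝ) ≤ b - a + 1 := by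
  rw [Int.card_Icc]
  rcases le_total ⌈a⌉ (⌊b⌋ + 1) with h | h
  · have hnonneg : 0 ≤ ⌊b⌋ + 1 - ⌈a⌉ := by omega
    rw [← Int.cast_natCast, Int.toNat_of_nonneg hnonneg]
    push_cast
    linarith [Int.floor_le b, Int.le_ceil a]
  · rw [Int.toNat_of_nonpos (by omega)]
    simpa using hab

lemma tsum_le_of_forall_abs_sub_le {ι : Type*} [Fintype ι] (c : ι → ℝ) {L : ℝ} (hL : 0 ≤ L)
    {f : (ι → ℤ) → ℝ≥0∞} {a : ℝ≥0∞} (hf : ∀ k, f k ≤ a)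
    (hsupp : ∀ k, f k ≠ 0 → ∀ i, |(k i : ℝ) - c i| ≤ L) :
    ∑' k, f k ≤ ENNReal.ofReal ((2 * L + 1) ^ Fintype.card ι) * a := by
  classical
  set box := Fintype.piFinset fun i => Finset.Icc ⌈c i - L⌉ ⌊c i + L⌋
  have hout : ∀ k ∉ box, f k = 0 := by
    intro k hk
    by_contra hne
    refine hk (Fintype.mem_piFinset.2 fun i => Finset.mem_Icc.2 ⟨?_, ?_⟩)
    · rw [Int.ceil_le]; linarith [(abs_le.1 (hsupp k hne i)).1]
    · rw [Int.le_floor]; linarith [(abs_le.1 (hsupp k hne i)).2]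
  have hcard : (box.card : ℝ) ≤ (2 * L + 1) ^ Fintype.card ι := by
    rw [Fintype.card_piFinset, Nat.cast_prod, ← Finset.card_univ, ← Finset.prod_const]
    refine Finset.prod_le_prod (fun i _ => by positivity) fun i _ => ?_
    exact (Int.card_Icc_ceil_floor_le (a := c i - L) (b := c i + L) (by linarith)).trans_eq
      (by ring)
  calc ∑' k, f k = ∑ k ∈ box, f k := tsum_eq_sum hout
    _ ≤ box.card • a := Finset.sum_le_card_nsmul _ _ _ fun k _ => hf k
    _ = ENNReal.ofReal box.card * a := by rw [nsmul_eq_mul, ENNReal.ofReal_natCast]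
    _ ≤ ENNReal.ofReal ((2 * L + 1) ^ Fintype.card ι) * a := by gcongr

lemma matOpNorm_eq_norm_toEuclideanCLM {d : ℕ} (B : Matrix (Fin d) (Fin d) ℝ) :
    matOpNorm B = ‖Matrix.toEuclideanCLM (𝕜 := ℝ) B‖ := by
  rw [matOpNorm, ← ContinuousLinearMap.sSup_unitClosedBall_eq_norm, sSup_image']
  rfl

lemma norm_matVec_le {d : ℕ} (B : Matrix (Fin d) (Fin d) ℝ) (x : Ed d) :
    ‖matVec B x‖ ≤ matOpNorm B * ‖x‖ := by
  rw [matOpNorm_eq_norm_toEuclideanCLM]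
  exact (Matrix.toEuclideanCLM (𝕜 := ℝ) B).le_opNorm x

lemma matOpNorm_nonneg {d : ℕ} (B : Matrix (Fin d) (Fin d) ℝ) : 0 ≤ matOpNorm B := by
  rw [matOpNorm_eq_norm_toEuclideanCLM]
  exact norm_nonneg _

lemma matVec_inv_add_matVec {d : ℕ} {A : Matrix (Fin d) (Fin d) ℝ} (hA : IsUnit A.det)
    (η x : Ed d) : matVec A⁻¹ (η + matVec A x) = matVec A⁻¹ η + x := by
  change WithLp.toLp 2 (A⁻¹ *ᵥ (η + A *ᵥ x)) = WithLp.toLp 2 (A⁻¹ *ᵥ η + x)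
  rw [Matrix.mulVec_add, Matrix.mulVec_mulVec, Matrix.nonsing_inv_mul A hA, Matrix.one_mulVec]

lemma abs_intCast_add_matVec_inv_le {d : ℕ} {A : Matrix (Fin d) (Fin d) ℝ} (hA : IsUnit A.det)
    (η : Ed d) (k : Fin d → ℤ) (i : Fin d) :
    |(k i : ℝ) + matVec A⁻¹ η i| ≤ matOpNorm A⁻¹ * ‖η + matVec A (zVec k)‖ :=
  calc |(k i : ℝ) + matVec A⁻¹ η i| = ‖matVec A⁻¹ (η + matVec A (zVec k)) i‖ := by
        rw [matVec_inv_add_matVec hA, Real.norm_eq_abs, add_comm]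
        rfl
    _ ≤ ‖matVec A⁻¹ (η + matVec A (zVec k))‖ := PiLp.norm_apply_le _ i
    _ ≤ matOpNorm A⁻¹ * ‖η + matVec A (zVec k)‖ := norm_matVec_le _ _

lemma tsum_ite_norm_add_matVec_lt_le {d : ℕ} {A : Matrix (Fin d) (Fin d) ℝ} (hA : IsUnit A.det)
    (η : Ed d) {R : ℝ} (hR : 0 ≤ R) (a : ℝ≥0∞) :
    ∑' k : Fin d → ℤ, (if ‖η + matVec A (zVec k)‖ < R then a else 0) ≤
      ENNReal.ofReal ((2 * (matOpNorm A⁻¹ * R) + 1) ^ d) * a := by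
  simpa using tsum_le_of_forall_abs_sub_le (fun i => -matVec A⁻¹ η i)
    (mul_nonneg (matOpNorm_nonneg _) hR) (fun k => by split_ifs <;> simp) fun k hk i =>
      (sub_neg_eq_add (k i : ℝ) _ ▸ abs_intCast_add_matVec_inv_le hA η k i).trans
        (mul_le_mul_of_nonneg_left (not_le.1 fun h => hk (if_neg h.not_gt)).le (matOpNorm_nonneg _))

lemma tsum_ofReal_inv_succ_sq_le_two : ∑' n : ℕ, ENNReal.ofReal ((((n : ℝ) + 1) ^ 2)⁻¹) ≤ 2 := by
  have hsum : HasSum (fun n : ℕ => (((n : ℝ) + 1) ^ 2)⁻¹) (Real.pi ^ 2 / 6) := by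
    simpa using (hasSum_nat_add_iff' 1).2 hasSum_zeta_two
  rw [← ENNReal.ofReal_tsum_of_nonneg (fun n => by positivity) hsum.summable, hsum.tsum_eq,
    ← ENNReal.ofReal_ofNat 2]
  refine ENNReal.ofReal_le_ofReal ?_
  nlinarith [Real.pi_lt_d2, Real.pi_pos]

lemma max_one_pow {x : ℝ} (hx : 0 ≤ x) (n : ℕ) : max 1 x ^ n = max 1 (x ^ n) := by
  rcases le_total x 1 with h | h
  · rw [max_eq_left h, max_eq_left (pow_le_one₀ hx h), one_pow]
  · rw [max_eq_right h, max_eq_right (one_le_pow₀ h)]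

lemma tsum_ite_norm_add_matVec_lt_succ_le {d : ℕ} {A : Matrix (Fin d) (Fin d) ℝ}
    (hA : IsUnit A.det) (η : Ed d) (n : ℕ) :
    ∑' k : Fin d → ℤ, (if ‖η + matVec A (zVec k)‖ < n + 1 then
        ENNReal.ofReal (((d + 1 : ℕ) : ℝ) * (((n : ℝ) + 1) ^ (d + 1 + 1))⁻¹) else 0) ≤
      ENNReal.ofReal ((d + 1) * (3 * max 1 (matOpNorm A⁻¹)) ^ d * (((n : ℝ) + 1) ^ 2)⁻¹) := by
  have hradius_nonneg : 0 ≤ 2 * (matOpNorm A⁻¹ * (n + 1)) + 1 := by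
    linarith [mul_nonneg (matOpNorm_nonneg A⁻¹) (by positivity : (0 : ℝ) ≤ n + 1)]
  refine (tsum_ite_norm_add_matVec_lt_le hA η (by positivity) _).trans ?_
  rw [← ENNReal.ofReal_mul (pow_nonneg hradius_nonneg _)]
  refine ENNReal.ofReal_le_ofReal ?_
  have hradius : 2 * (matOpNorm A⁻¹ * (n + 1)) + 1 ≤ 3 * max 1 (matOpNorm A⁻¹) * (n + 1) := by
    nlinarith [le_max_left 1 (matOpNorm A⁻¹), le_max_right 1 (matOpNorm A⁻¹),
      (n.cast_nonneg : (0 : ℝ) ≤ n)]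
  calc _ ≤ (3 * max 1 (matOpNorm A⁻¹) * (n + 1)) ^ d *
          (((d + 1 : ℕ) : ℝ) * (((n : ℝ) + 1) ^ (d + 1 + 1))⁻¹) := by
        gcongr
    _ = _ := by rw [mul_pow]; push_cast; field_simp; ring

lemma add_one_mul_three_mul_max_one_pow_le (d : ℕ) {x : ℝ} (hx : 0 ≤ x) :
    ((d : ℝ) + 1) * (3 * max 1 x) ^ d * 2 ≤
      ((d : ℝ) + 1) * 2 ^ (1 + 2 * d) * max 1 (x ^ (d + 1)) := by
  have h3 : (3 : ℝ) ^ d ≤ 2 ^ (2 * d) := by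
    rw [pow_mul]
    exact pow_le_pow_left₀ (by norm_num) (by norm_num) d
  calc ((d : ℝ) + 1) * (3 * max 1 x) ^ d * 2
      ≤ ((d : ℝ) + 1) * (2 ^ (2 * d) * max 1 x ^ (d + 1)) * 2 := by
        rw [mul_pow]
        gcongr
        · exact le_max_left 1 x
        · exact d.le_succ
    _ = ((d : ℝ) + 1) * 2 ^ (1 + 2 * d) * max 1 (x ^ (d + 1)) := by
        rw [max_one_pow hx]
        ring

/-- For every `d ∈ ℕ`, `η ∈ ℝ^d` and `A ∈ GL(d, ℝ)`:
`∑_{k ∈ ℤ^d} (1 + |η + A k|)^{-(d+1)} ≤ (d+1) · 2^{1+2d} · max {1, ‖A⁻¹‖^{d+1}}`. -/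
theorem stmt17 (d : ℕ) (η : Ed d) (A : Matrix (Fin d) (Fin d) ℝ) (hA : IsUnit A.det) :
    ∑' k : Fin d → ℤ, ENNReal.ofReal (((1 + ‖η + matVec A (zVec k)‖) ^ (d + 1))⁻¹)
      ≤ ENNReal.ofReal
          (((d : ℝ) + 1) * 2 ^ (1 + 2 * d) * max 1 (matOpNorm A⁻¹ ^ (d + 1))) := by
  set C := ((d : ℝ) + 1) * (3 * max 1 (matOpNorm A⁻¹)) ^ d
  calc ∑' k : Fin d → ℤ, ENNReal.ofReal (((1 + ‖η + matVec A (zVec k)‖) ^ (d + 1))⁻¹)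
      ≤ ∑' (k : Fin d → ℤ) (n : ℕ), if ‖η + matVec A (zVec k)‖ < n + 1 then
          ENNReal.ofReal (((d + 1 : ℕ) : ℝ) * (((n : ℝ) + 1) ^ (d + 1 + 1))⁻¹) else 0 :=
        ENNReal.tsum_le_tsum fun k => ofReal_inv_one_add_pow_le_tsum (norm_nonneg _) d.succ_ne_zero
    _ = ∑' (n : ℕ) (k : Fin d → ℤ), _ := ENNReal.tsum_comm
    _ ≤ ∑' n : ℕ, ENNReal.ofReal (C * (((n : ℝ) + 1) ^ 2)⁻¹) :=
        ENNReal.tsum_le_tsum (tsum_ite_norm_add_matVec_lt_succ_le hA η)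
    _ = ENNReal.ofReal C * ∑' n : ℕ, ENNReal.ofReal ((((n : ℝ) + 1) ^ 2)⁻¹) := by
        rw [← ENNReal.tsum_mul_left]
        exact tsum_congr fun n => ENNReal.ofReal_mul (by positivity)
    _ ≤ ENNReal.ofReal C * ENNReal.ofReal 2 := by
        rw [ENNReal.ofReal_ofNat]
        gcongr
        exact tsum_ofReal_inv_succ_sq_le_two
    _ ≤ _ := by
        rw [← ENNReal.ofReal_mul (by positivity)]
        exact ENNReal.ofReal_le_ofReal
          (add_one_mul_three_mul_max_one_pow_le d (matOpNorm_nonneg _))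

end
end
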